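/- arXiv:1910.12208 — 2 statements merged into one kernel-verified Lean document; each statement's English description precedes it below -/
import Mathlib

section
/- Let F be a symmetric positive definite q×q real matrix, Π a q×q permutation matrix, 1 ≤ k ≤ q, Q_1 the upper-left k×k block of Π F Π^T, and H the q×q matrix whose upper-left k×k block is Q_1^{−1} and whose other entries are 0. Then P = F^{1/2} Π^T [(Π F Π^T)^{−1} − H] Π F^{1/2} is a symmetric idempotent matrix (an orthogonal projection) with trace(P) = rank(P) = q − k. -/
open Matrix
open scoped BigOperators Classical

noncomputable section

namespace ProjLemma

/-- pad the upper-left `k × k` block of `A` with the identity outside the block -/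
def blockPad {q : ℕ} (k : ℕ) (A : Matrix (Fin q) (Fin q) ℝ) : Matrix (Fin q) (Fin q) ℝ :=
  Matrix.of fun i j => if (i : ℕ) < k ∧ (j : ℕ) < k then A i j else if i = j then 1 else 0

/-- the `q × q` matrix whose upper-left `k × k` block is the inverse `Q₁⁻¹` of the
upper-left `k × k` block `Q₁` of `A` and whose other entries are `0` -/
def blockInvPad {q : ℕ} (k : ℕ) (A : Matrix (Fin q) (Fin q) ℝ) : Matrix (Fin q) (Fin q) ℝ :=
  Matrix.of fun i j => if (i : ℕ) < k ∧ (j : ℕ) < k then (blockPad k A)⁻¹ i j else 0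

/-- the square root of a positive semidefinite matrix, as `Matrix.PosSemidef.sqrt` was
defined in the older Mathlib -/
def posSemidefSqrt {n : Type*} [Fintype n] [DecidableEq n] {A : Matrix n n ℝ}
    (hA : A.PosSemidef) : Matrix n n ℝ :=
  hA.1.eigenvectorUnitary.1 * diagonal ((↑) ∘ (√·) ∘ hA.1.eigenvalues) *
    (star hA.1.eigenvectorUnitary : Matrix n n ℝ)

/-!
Write `G = Π F Πᵀ`, let `E` be the diagonal projection onto the first `k` coordinates and
`B = E G E + (1 - E)`, i.e. `Q₁` padded by the identity, so that `H = E B⁻¹ E`. `B` is positive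
definite, its quadratic form being `(E x)ᵀ G (E x) + |(1 - E) x|²`. From `B E = E G E` and
`B (1 - E) = 1 - E` one gets `H G H = H` and `tr (H G) = tr E = k`, hence `M = G⁻¹ - H`
satisfies `M G M = M`. With `A = Π F^{1/2}` we have `A Aᵀ = G` and `P = Aᵀ M A`, so
`P² = Aᵀ (M G M) A = P` and `tr P = tr (M G) = q - k`; the rank of an idempotent matrix is its
trace.
-/

section Compression

variable {n K : Type*} [Fintype n] [DecidableEq n] [CommRing K] {E G : Matrix n n K}

def compressionPad (E G : Matrix n n K) : Matrix n n K :=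
  E * G * E + (1 - E)

def compressionInv (E G : Matrix n n K) : Matrix n n K :=
  E * (compressionPad E G)⁻¹ * E

lemma compressionPad_mul (hE : IsIdempotentElem E) : compressionPad E G * E = E * G * E := by
  rw [compressionPad, add_mul, sub_mul, one_mul, mul_assoc (E * G), hE.eq, sub_self, add_zero]

lemma compressionPad_mul_one_sub (hE : IsIdempotentElem E) :
    compressionPad E G * (1 - E) = 1 - E := by
  rw [mul_sub, mul_one, compressionPad_mul hE, compressionPad, add_sub_cancel_left]

lemma compressionInv_mul_mul_self (hE : IsIdempotentElem E) (hB : IsUnit (compressionPad E G).det) :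
    compressionInv E G * G * compressionInv E G = compressionInv E G := by
  have hBE := compressionPad_mul (G := G) hE
  unfold compressionInv
  generalize compressionPad E G = B at hB hBE
  calc E * B⁻¹ * E * G * (E * B⁻¹ * E) = E * B⁻¹ * (E * G * E) * B⁻¹ * E := by
        simp only [mul_assoc]
    _ = E * (B⁻¹ * B) * E * B⁻¹ * E := by rw [← hBE]; simp only [mul_assoc]
    _ = E * B⁻¹ * E := by rw [nonsing_inv_mul B hB, mul_one, hE.eq]

lemma trace_compressionInv_mul (hE : IsIdempotentElem E) (hB : IsUnit (compressionPad E G).det) :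
    (compressionInv E G * G).trace = E.trace := by
  have hB₀ : compressionPad E G - (1 - E) = E * G * E := add_sub_cancel_right _ _
  have hB₁ := compressionPad_mul_one_sub (G := G) hE
  unfold compressionInv
  generalize compressionPad E G = B at hB hB₀ hB₁
  have hB₁' : B⁻¹ * (1 - E) = 1 - E := by
    conv_lhs => rw [← hB₁, ← mul_assoc, nonsing_inv_mul B hB, one_mul]
  calc (E * B⁻¹ * E * G).trace = (E * (B⁻¹ * E * G)).trace := by simp only [mul_assoc]
    _ = (B⁻¹ * (E * G * E)).trace := by rw [trace_mul_comm]; simp only [mul_assoc]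
    _ = E.trace := by rw [← hB₀, mul_sub, nonsing_inv_mul B hB, hB₁', sub_sub_cancel]

lemma transpose_compressionInv (hE : Eᵀ = E) (hG : Gᵀ = G) :
    (compressionInv E G)ᵀ = compressionInv E G := by
  simp only [compressionInv, compressionPad, transpose_mul, transpose_nonsing_inv, transpose_add,
    transpose_sub, transpose_one, hE, hG, mul_assoc]

end Compression

section PosDef

open scoped ComplexOrder

variable {n 𝕜 : Type*} [Fintype n] [RCLike 𝕜]

lemma dotProduct_conjTranspose_mul_mul_mulVec (C A : Matrix n n 𝕜) (x : n → 𝕜) :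
    star x ⬝ᵥ ((Cᴴ * A * C) *ᵥ x) = star (C *ᵥ x) ⬝ᵥ (A *ᵥ (C *ᵥ x)) := by
  rw [star_mulVec, ← mulVec_mulVec, ← mulVec_mulVec, dotProduct_mulVec]

lemma posDef_compressionPad [DecidableEq n] {E G : Matrix n n 𝕜} (hG : G.PosDef)
    (hE : IsIdempotentElem E) (hEh : E.IsHermitian) : (compressionPad E G).PosDef := by
  have hsplit : compressionPad E G = Eᴴ * G * E + (1 - E)ᴴ * 1 * (1 - E) := by
    rw [compressionPad, conjTranspose_sub, conjTranspose_one, hEh.eq, mul_one, hE.one_sub.eq]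
  rw [hsplit]
  refine .of_dotProduct_mulVec_pos ((isHermitian_conjTranspose_mul_mul E hG.1).add
    (isHermitian_conjTranspose_mul_mul _ isHermitian_one)) fun x hx => ?_
  rw [add_mulVec, dotProduct_add, dotProduct_conjTranspose_mul_mul_mulVec,
    dotProduct_conjTranspose_mul_mul_mulVec]
  by_cases hEx : E *ᵥ x = 0
  · have h1E : (1 - E) *ᵥ x = x := by rw [sub_mulVec, one_mulVec, hEx, sub_zero]
    rw [hEx, h1E, mulVec_zero, dotProduct_zero, zero_add]
    exact PosDef.one.dotProduct_mulVec_pos hx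
  · exact add_pos_of_pos_of_nonneg (hG.dotProduct_mulVec_pos hEx)
      (PosSemidef.one.dotProduct_mulVec_nonneg _)

end PosDef

lemma inv_sub_mul_mul_inv_sub {n K : Type*} [Fintype n] [DecidableEq n] [CommRing K]
    {G H : Matrix n n K} (hG : IsUnit G.det) (hH : H * G * H = H) :
    (G⁻¹ - H) * G * (G⁻¹ - H) = G⁻¹ - H := by
  calc (G⁻¹ - H) * G * (G⁻¹ - H)
        = G⁻¹ * G * G⁻¹ - G⁻¹ * G * H - H * (G * G⁻¹) + H * G * H := by noncomm_ring
    _ = G⁻¹ - H := by rw [nonsing_inv_mul G hG, mul_nonsing_inv G hG, hH]; noncomm_ring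

lemma isIdempotentElem_transpose_mul_mul {m n R : Type*} [Fintype m] [Fintype n] [CommSemiring R]
    {A : Matrix m n R} {M : Matrix m m R} (h : M * (A * Aᵀ) * M = M) :
    IsIdempotentElem (Aᵀ * M * A) := by
  calc Aᵀ * M * A * (Aᵀ * M * A) = Aᵀ * (M * (A * Aᵀ) * M) * A := by
        simp only [Matrix.mul_assoc]
    _ = Aᵀ * M * A := by rw [h]

lemma rank_eq_trace_of_isIdempotentElem {n K : Type*} [Fintype n] [DecidableEq n] [Field K]
    {A : Matrix n n K} (hA : IsIdempotentElem A) : (A.rank : K) = A.trace := by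
  have h : IsIdempotentElem A.mulVecLin := by
    rw [IsIdempotentElem, Module.End.mul_eq_comp, ← mulVecLin_mul, hA.eq]
  rw [rank, ← (LinearMap.IsIdempotentElem.isProj_range _ h).trace, ← toLin'_apply',
    trace_toLin'_eq]

section Projection

variable {m n K : Type*} [Fintype n] [DecidableEq n] [CommRing K]
  {E G : Matrix n n K} {A : Matrix n m K}

lemma transpose_transpose_mul_inv_sub_compressionInv_mul (hE : Eᵀ = E) (hG : Gᵀ = G) :
    (Aᵀ * (G⁻¹ - compressionInv E G) * A)ᵀ = Aᵀ * (G⁻¹ - compressionInv E G) * A := by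
  rw [transpose_mul, transpose_mul, transpose_transpose, transpose_sub, transpose_nonsing_inv, hG,
    transpose_compressionInv hE hG, Matrix.mul_assoc]

lemma isIdempotentElem_transpose_mul_inv_sub_compressionInv_mul [Fintype m] (hG : IsUnit G.det)
    (hE : IsIdempotentElem E) (hB : IsUnit (compressionPad E G).det) (hA : A * Aᵀ = G) :
    IsIdempotentElem (Aᵀ * (G⁻¹ - compressionInv E G) * A) := by
  subst hA
  exact isIdempotentElem_transpose_mul_mul <|
    inv_sub_mul_mul_inv_sub hG (compressionInv_mul_mul_self hE hB)

lemma trace_transpose_mul_inv_sub_compressionInv_mul [Fintype m] (hG : IsUnit G.det)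
    (hE : IsIdempotentElem E) (hB : IsUnit (compressionPad E G).det) (hA : A * Aᵀ = G) :
    (Aᵀ * (G⁻¹ - compressionInv E G) * A).trace = Fintype.card n - E.trace := by
  rw [trace_mul_comm, ← Matrix.mul_assoc, hA, mul_sub, mul_nonsing_inv G hG, trace_sub, trace_one,
    trace_mul_comm G, trace_compressionInv_mul hE hB]

end Projection

section Sqrt

variable {n : Type*} [Fintype n] [DecidableEq n] {A : Matrix n n ℝ}

lemma posSemidefSqrt_eq_cfc (hA : A.PosSemidef) : posSemidefSqrt hA = cfc Real.sqrt A := by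
  rw [hA.1.cfc_eq]; rfl

lemma posSemidefSqrt_mul_self (hA : A.PosSemidef) : posSemidefSqrt hA * posSemidefSqrt hA = A := by
  rw [posSemidefSqrt_eq_cfc, ← cfc_mul Real.sqrt Real.sqrt A]
  conv_rhs => rw [← cfc_id' ℝ A hA.1.isSelfAdjoint]
  refine cfc_congr fun x hx => Real.mul_self_sqrt ?_
  exact (posSemidef_iff_isHermitian_and_spectrum_nonneg.mp hA).2 hx

lemma transpose_posSemidefSqrt (hA : A.PosSemidef) :
    (posSemidefSqrt hA)ᵀ = posSemidefSqrt hA := by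
  have : IsSelfAdjoint (cfc Real.sqrt A) := cfc_predicate _ _
  rwa [posSemidefSqrt_eq_cfc, ← conjTranspose_eq_transpose_of_trivial]

end Sqrt

lemma isUnit_det_of_perm {n R : Type*} [Fintype n] [DecidableEq n] [CommRing R]
    (σ : Equiv.Perm n) : IsUnit (of fun i j => if σ j = i then (1 : R) else 0).det := by
  have hσ : (of fun i j => if σ j = i then (1 : R) else 0) = (σ.permMatrix R)ᵀ := by
    ext i j
    simp [PEquiv.toMatrix_apply]
  rw [hσ, det_transpose, det_permutation]
  simpa using (Equiv.Perm.sign σ).isUnit.map (Int.castRingHom R)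

section Leading

variable {q k : ℕ}

def leadingProj (q k : ℕ) : Matrix (Fin q) (Fin q) ℝ :=
  diagonal fun i => if (i : ℕ) < k then 1 else 0

lemma isIdempotentElem_leadingProj : IsIdempotentElem (leadingProj q k) := by
  simp [IsIdempotentElem, leadingProj, diagonal_mul_diagonal]

lemma isHermitian_leadingProj : (leadingProj q k).IsHermitian := by
  simp [leadingProj, IsHermitian]

lemma trace_leadingProj (hkq : k ≤ q) : (leadingProj q k).trace = k := by
  simp [leadingProj, trace_diagonal, Finset.sum_boole, Fin.card_filter_val_lt, hkq]

lemma blockPad_eq_compressionPad (A : Matrix (Fin q) (Fin q) ℝ) :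
    blockPad k A = compressionPad (leadingProj q k) A := by
  ext i j
  rcases eq_or_ne i j with rfl | hij
  · by_cases hi : (i : ℕ) < k <;> simp [blockPad, compressionPad, leadingProj, hi]
  · simp [blockPad, compressionPad, leadingProj, diagonal_mul, mul_diagonal, one_apply_ne hij, hij]
    grind

lemma blockInvPad_eq_compressionInv (A : Matrix (Fin q) (Fin q) ℝ) :
    blockInvPad k A = compressionInv (leadingProj q k) A := by
  rw [compressionInv, ← blockPad_eq_compressionPad]
  ext i j
  by_cases hi : (i : ℕ) < k <;> by_cases hj : (j : ℕ) < k <;>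
    simp [blockInvPad, leadingProj, diagonal_mul, mul_diagonal, hi, hj]

end Leading

theorem projection_trace_rank_general (q k : ℕ) (hkq : k ≤ q)
    (F : Matrix (Fin q) (Fin q) ℝ) (hF : F.PosDef)
    (Pm : Matrix (Fin q) (Fin q) ℝ)
    (hPm : ∃ σ : Equiv.Perm (Fin q),
      Pm = Matrix.of fun i j => if σ j = i then (1 : ℝ) else 0) :
    ((posSemidefSqrt hF.posSemidef) * Pmᵀ *
        ((Pm * F * Pmᵀ)⁻¹ - blockInvPad k (Pm * F * Pmᵀ)) * Pm * (posSemidefSqrt hF.posSemidef))ᵀ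
      = (posSemidefSqrt hF.posSemidef) * Pmᵀ *
          ((Pm * F * Pmᵀ)⁻¹ - blockInvPad k (Pm * F * Pmᵀ)) * Pm * (posSemidefSqrt hF.posSemidef) ∧
    ((posSemidefSqrt hF.posSemidef) * Pmᵀ *
        ((Pm * F * Pmᵀ)⁻¹ - blockInvPad k (Pm * F * Pmᵀ)) * Pm * (posSemidefSqrt hF.posSemidef)) *
      ((posSemidefSqrt hF.posSemidef) * Pmᵀ *
        ((Pm * F * Pmᵀ)⁻¹ - blockInvPad k (Pm * F * Pmᵀ)) * Pm * (posSemidefSqrt hF.posSemidef))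
      = (posSemidefSqrt hF.posSemidef) * Pmᵀ *
          ((Pm * F * Pmᵀ)⁻¹ - blockInvPad k (Pm * F * Pmᵀ)) * Pm * (posSemidefSqrt hF.posSemidef) ∧
    ((posSemidefSqrt hF.posSemidef) * Pmᵀ *
        ((Pm * F * Pmᵀ)⁻¹ - blockInvPad k (Pm * F * Pmᵀ)) * Pm * (posSemidefSqrt hF.posSemidef)).trace
      = ((q - k : ℕ) : ℝ) ∧
    ((posSemidefSqrt hF.posSemidef) * Pmᵀ *
        ((Pm * F * Pmᵀ)⁻¹ - blockInvPad k (Pm * F * Pmᵀ)) * Pm * (posSemidefSqrt hF.posSemidef)).rank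
      = q - k := by
  obtain ⟨σ, hσ⟩ := hPm
  set S := posSemidefSqrt hF.posSemidef
  set G := Pm * F * Pmᵀ
  set E := leadingProj q k
  have hE : IsIdempotentElem E := isIdempotentElem_leadingProj
  have hG : G.PosDef := by
    simpa [conjTranspose_eq_transpose_of_trivial] using hF.mul_mul_conjTranspose_same
      (vecMul_injective_iff_isUnit.2 ((isUnit_iff_isUnit_det Pm).2 (hσ ▸ isUnit_det_of_perm σ)))
  have hGdet : IsUnit G.det := (isUnit_iff_isUnit_det G).1 hG.isUnit
  have hBdet : IsUnit (compressionPad E G).det :=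
    (isUnit_iff_isUnit_det _).1 (posDef_compressionPad hG hE isHermitian_leadingProj).isUnit
  have hSt : Sᵀ = S := transpose_posSemidefSqrt _
  have hA : (Pm * S) * (Pm * S)ᵀ = G := by
    rw [transpose_mul, hSt, Matrix.mul_assoc, ← Matrix.mul_assoc S, posSemidefSqrt_mul_self,
      ← Matrix.mul_assoc]
  have hP : S * Pmᵀ * (G⁻¹ - blockInvPad k G) * Pm * S
      = (Pm * S)ᵀ * (G⁻¹ - compressionInv E G) * (Pm * S) := by
    rw [show blockInvPad k G = compressionInv E G from blockInvPad_eq_compressionInv G,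
      transpose_mul, hSt]
    simp only [Matrix.mul_assoc]
  rw [hP]
  have hidem := isIdempotentElem_transpose_mul_inv_sub_compressionInv_mul hGdet hE hBdet hA
  have htrace :
      ((Pm * S)ᵀ * (G⁻¹ - compressionInv E G) * (Pm * S)).trace = ((q - k : ℕ) : ℝ) := by
    rw [trace_transpose_mul_inv_sub_compressionInv_mul hGdet hE hBdet hA, trace_leadingProj hkq,
      Fintype.card_fin, Nat.cast_sub hkq]
  exact ⟨transpose_transpose_mul_inv_sub_compressionInv_mul isHermitian_leadingProj hG.1,
    hidem.eq, htrace, Nat.cast_injective ((rank_eq_trace_of_isIdempotentElem hidem).trans htrace)⟩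

/-- Let `F` be a symmetric positive definite `q × q` real matrix, `Π`
a `q × q` permutation matrix, `1 ≤ k ≤ q`, `Q₁` the upper-left `k × k` block of
`Π F Πᵀ`, and `H` the `q × q` matrix whose upper-left `k × k` block is `Q₁⁻¹` and whose
other entries are `0`.  Then `P = F^{1/2} Πᵀ [(Π F Πᵀ)⁻¹ − H] Π F^{1/2}` is a symmetric
idempotent matrix (an orthogonal projection) with `trace P = rank P = q − k`. -/
theorem projection_trace_rank (q k : ℕ) (hk1 : 1 ≤ k) (hkq : k ≤ q)
    (F : Matrix (Fin q) (Fin q) ℝ) (hF : F.PosDef) (hFsymm : Fᵀ = F)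
    (Pm : Matrix (Fin q) (Fin q) ℝ)
    (hPm : ∃ σ : Equiv.Perm (Fin q),
      Pm = Matrix.of fun i j => if σ j = i then (1 : ℝ) else 0) :
    ((posSemidefSqrt hF.posSemidef) * Pmᵀ *
        ((Pm * F * Pmᵀ)⁻¹ - blockInvPad k (Pm * F * Pmᵀ)) * Pm * (posSemidefSqrt hF.posSemidef))ᵀ
      = (posSemidefSqrt hF.posSemidef) * Pmᵀ *
          ((Pm * F * Pmᵀ)⁻¹ - blockInvPad k (Pm * F * Pmᵀ)) * Pm * (posSemidefSqrt hF.posSemidef) ∧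
    ((posSemidefSqrt hF.posSemidef) * Pmᵀ *
        ((Pm * F * Pmᵀ)⁻¹ - blockInvPad k (Pm * F * Pmᵀ)) * Pm * (posSemidefSqrt hF.posSemidef)) *
      ((posSemidefSqrt hF.posSemidef) * Pmᵀ *
        ((Pm * F * Pmᵀ)⁻¹ - blockInvPad k (Pm * F * Pmᵀ)) * Pm * (posSemidefSqrt hF.posSemidef))
      = (posSemidefSqrt hF.posSemidef) * Pmᵀ *
          ((Pm * F * Pmᵀ)⁻¹ - blockInvPad k (Pm * F * Pmᵀ)) * Pm * (posSemidefSqrt hF.posSemidef) ∧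
    ((posSemidefSqrt hF.posSemidef) * Pmᵀ *
        ((Pm * F * Pmᵀ)⁻¹ - blockInvPad k (Pm * F * Pmᵀ)) * Pm * (posSemidefSqrt hF.posSemidef)).trace
      = ((q - k : ℕ) : ℝ) ∧
    ((posSemidefSqrt hF.posSemidef) * Pmᵀ *
        ((Pm * F * Pmᵀ)⁻¹ - blockInvPad k (Pm * F * Pmᵀ)) * Pm * (posSemidefSqrt hF.posSemidef)).rank
      = q - k :=
  projection_trace_rank_general q k hkq F hF Pm hPm

end ProjLemma
end
end

section
/- Let J be a symmetric positive definite (q1+q2)×(q1+q2) matrix with blocks J_00, J_01, J_10, J_11, K = (J_11 − J_10 J_00^{−1} J_01)^{−1}, Γ_m a (k_m−q1)×q2 selection (projection) matrix, K_m = (Γ_m K^{−1} Γ_m^T)^{−1}, H̃_m = K^{−1/2} Γ_m^T K_m Γ_m K^{−1/2}, J_{S_m} the matrix with blocks (J_00, J_01 Γ_m^T; Γ_m J_10, Γ_m J_11 Γ_m^T), and let a ∈ ℝ^{q1}, b ∈ ℝ^{q2}, b_{S_m} = Γ_m b, and ω = J_10 J_00^{−1} a − b. Then for every δ' ∈ ℝ^{q2}: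 (a^T, b_{S_m}^T) J_{S_m}^{−1} (J_01; Γ_m J_11) δ' − b^T δ' = ω^T (I_{q2} − K^{1/2} H̃_m K^{−1/2}) δ'. -/
open Matrix
open scoped BigOperators Classical

noncomputable section

namespace HjortDrift

/-- `Γ` is a selection (projection) matrix: its rows are distinct standard basis vectors. -/
def IsSelection {r q2 : ℕ} (Γ : Matrix (Fin r) (Fin q2) ℝ) : Prop :=
  ∃ φ : Fin r → Fin q2, Function.Injective φ ∧
    Γ = Matrix.of fun i j => if φ i = j then (1 : ℝ) else 0

private lemma conjT_eq_transpose {m n : Type*} (M : Matrix m n ℝ) : Mᴴ = Mᵀ := by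
  ext i j; simp [Matrix.conjTranspose_apply]

private lemma herm_of_symm {n : Type*} [Fintype n] {M : Matrix n n ℝ} (h : Mᵀ = M) :
    M.IsHermitian := by
  show Mᴴ = M
  rw [conjT_eq_transpose, h]

set_option maxHeartbeats 2000000 in
/-- Let `J` be a symmetric positive definite `(q1+q2) × (q1+q2)`
matrix with blocks `J_00, J_01, J_10, J_11`, `K = (J_11 − J_10 J_00⁻¹ J_01)⁻¹`, `Γ_m` a
selection matrix, `K_m = (Γ_m K⁻¹ Γ_mᵀ)⁻¹`, `H̃_m = K^{−1/2} Γ_mᵀ K_m Γ_m K^{−1/2}`,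
`J_{S_m}` the matrix with blocks `(J_00, J_01 Γ_mᵀ; Γ_m J_10, Γ_m J_11 Γ_mᵀ)`, and let
`a ∈ ℝ^{q1}`, `b ∈ ℝ^{q2}`, `b_{S_m} = Γ_m b`, `ω = J_10 J_00⁻¹ a − b`.  Then for every
`δ' ∈ ℝ^{q2}`:
`(aᵀ, b_{S_m}ᵀ) J_{S_m}⁻¹ (J_01; Γ_m J_11) δ' − bᵀ δ'
  = ωᵀ (I_{q2} − K^{1/2} H̃_m K^{−1/2}) δ'`,
where `K^{1/2}` is the symmetric positive definite square root `R` of `K`. -/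
theorem drift_identity {q1 q2 r : ℕ}
    (J : Matrix (Fin q1 ⊕ Fin q2) (Fin q1 ⊕ Fin q2) ℝ)
    (hJsymm : Jᵀ = J) (hJ : J.PosDef)
    (Γ : Matrix (Fin r) (Fin q2) ℝ) (hΓ : IsSelection Γ)
    (R : Matrix (Fin q2) (Fin q2) ℝ) (hR : R.PosDef)
    (hRK : R * R = (J.toBlocks₂₂ - J.toBlocks₂₁ * J.toBlocks₁₁⁻¹ * J.toBlocks₁₂)⁻¹)
    (a : Fin q1 → ℝ) (b : Fin q2 → ℝ) :
    ∀ dlt : Fin q2 → ℝ,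
      Sum.elim a (Γ.mulVec b) ⬝ᵥ
          (Matrix.fromBlocks J.toBlocks₁₁ (J.toBlocks₁₂ * Γᵀ) (Γ * J.toBlocks₂₁)
              (Γ * J.toBlocks₂₂ * Γᵀ))⁻¹.mulVec
            (Sum.elim (J.toBlocks₁₂.mulVec dlt) ((Γ * J.toBlocks₂₂).mulVec dlt))
        - b ⬝ᵥ dlt
      = (J.toBlocks₂₁.mulVec (J.toBlocks₁₁⁻¹.mulVec a) - b) ⬝ᵥ
          ((1 - R *
              (R⁻¹ * Γᵀ *
                (Γ * ((J.toBlocks₂₂ - J.toBlocks₂₁ * J.toBlocks₁₁⁻¹ * J.toBlocks₁₂)⁻¹)⁻¹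
                  * Γᵀ)⁻¹ * Γ * R⁻¹) * R⁻¹).mulVec dlt) := by
  obtain ⟨φ, hφ, hΓeq⟩ := hΓ
  intro dlt
  set A := J.toBlocks₁₁ with hAdef
  set B := J.toBlocks₁₂ with hBdef
  set C := J.toBlocks₂₁ with hCdef
  set D := J.toBlocks₂₂ with hDdef
  have hJblocks : J = Matrix.fromBlocks A B C D := by
    rw [hAdef, hBdef, hCdef, hDdef]; exact (Matrix.fromBlocks_toBlocks J).symm
  clear_value A B C D
  -- basic symmetry facts
  have hCB : C = Bᵀ := by
    ext i j
    have := congrFun (congrFun hJsymm (Sum.inr i)) (Sum.inl j)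
    simpa [hCdef, hBdef, Matrix.toBlocks₂₁, Matrix.toBlocks₁₂] using this.symm
  have hAsym : Aᵀ = A := by
    ext i j
    have := congrFun (congrFun hJsymm (Sum.inl i)) (Sum.inl j)
    simpa [hAdef, Matrix.toBlocks₁₁] using this
  have hDsym : Dᵀ = D := by
    ext i j
    have := congrFun (congrFun hJsymm (Sum.inr i)) (Sum.inr j)
    simpa [hDdef, Matrix.toBlocks₂₂] using this
  have hBH : Bᴴ = C := by rw [conjT_eq_transpose, hCB]
  -- A is positive definite
  have hApos : A.PosDef := by
    refine Matrix.PosDef.of_dotProduct_mulVec_pos (herm_of_symm hAsym) fun x hx => ?_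
    have hxne : (Sum.elim x (0 : Fin q2 → ℝ)) ≠ 0 := by
      intro h
      apply hx
      funext i
      exact congrFun h (Sum.inl i)
    have h0 := hJ.dotProduct_mulVec_pos hxne
    rw [hJblocks] at h0
    simpa [Matrix.fromBlocks_mulVec, sumElim_dotProduct_sumElim] using h0
  have hAdet : IsUnit A.det := hApos.det_pos.ne'.isUnit
  haveI : Invertible A := A.invertibleOfIsUnitDet hAdet
  have hAA' : A * A⁻¹ = 1 := Matrix.mul_nonsing_inv _ hAdet
  set S := D - C * A⁻¹ * B with hSdef
  clear_value S
  -- S symmetric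
  have hSsym : Sᵀ = S := by
    rw [hSdef, hCB]
    simp [Matrix.transpose_sub, Matrix.transpose_mul, Matrix.transpose_nonsing_inv,
      hAsym, hDsym, Matrix.mul_assoc]
  -- S positive definite (Schur complement)
  have hSpos : S.PosDef := by
    refine Matrix.PosDef.of_dotProduct_mulVec_pos (herm_of_symm hSsym) fun y hy => ?_
    have hvne : (Sum.elim (-((A⁻¹ * B) *ᵥ y)) y) ≠ 0 := by
      intro h
      apply hy
      funext i
      exact congrFun h (Sum.inr i)
    have h0 := hJ.dotProduct_mulVec_pos hvne
    have hJb : J = Matrix.fromBlocks A B Bᴴ D := by rw [hJblocks, hBH]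
    rw [hJb, Matrix.dotProduct_mulVec,
      Matrix.schur_complement_eq₁₁ B D _ _ hApos.1] at h0
    simpa [hBH, hSdef, ← hCB, Matrix.dotProduct_mulVec] using h0
  have hSdet : IsUnit S.det := hSpos.det_pos.ne'.isUnit
  have hSinvinv : S⁻¹⁻¹ = S := Matrix.nonsing_inv_nonsing_inv _ hSdet
  -- Γ S Γᵀ positive definite
  have hGSG : (Γ * S * Γᵀ).PosDef := by
    refine Matrix.PosDef.of_dotProduct_mulVec_pos ?_ ?_
    · apply herm_of_symm
      simp [Matrix.transpose_mul, hSsym, Matrix.mul_assoc]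
    · intro x hx
      have hy : (x ᵥ* Γ) ≠ 0 := by
        intro h
        apply hx
        funext i
        have := congrFun h (φ i)
        rw [hΓeq] at this
        simpa [Matrix.vecMul, dotProduct, hφ.eq_iff] using this
      have h0 := hSpos.dotProduct_mulVec_pos hy
      have hmv : (Γ * S * Γᵀ) *ᵥ x = Γ *ᵥ (S *ᵥ (x ᵥ* Γ)) := by
        rw [← Matrix.mulVec_mulVec, ← Matrix.mulVec_mulVec, Matrix.mulVec_transpose]
      simpa [hmv, Matrix.dotProduct_mulVec] using h0
  have hGSGdet : IsUnit (Γ * S * Γᵀ).det := hGSG.det_pos.ne'.isUnit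
  set M := (Γ * S * Γᵀ)⁻¹ with hMdef
  clear_value M
  have hMM : Γ * S * Γᵀ * M = 1 := by
    rw [hMdef]; exact Matrix.mul_nonsing_inv _ hGSGdet
  -- the block matrix J_{S_m} is positive definite
  have hSchurJS : Γ * D * Γᵀ - (B * Γᵀ)ᴴ * A⁻¹ * (B * Γᵀ) = Γ * S * Γᵀ := by
    rw [conjT_eq_transpose, Matrix.transpose_mul, Matrix.transpose_transpose, ← hCB, hSdef]
    simp only [Matrix.mul_sub, Matrix.sub_mul, Matrix.mul_assoc]
  have hBΓH : (B * Γᵀ)ᴴ = Γ * C := by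
    rw [conjT_eq_transpose, Matrix.transpose_mul, Matrix.transpose_transpose, hCB]
  have hJSpos : (Matrix.fromBlocks A (B * Γᵀ) (Γ * C) (Γ * D * Γᵀ)).PosDef := by
    rw [← hBΓH]
    refine Matrix.PosDef.of_dotProduct_mulVec_pos ?_ ?_
    · exact (Matrix.IsHermitian.fromBlocks₁₁ _ _ hApos.1).2
        (by rw [hSchurJS]; exact hGSG.1)
    · intro v hv
      rw [Matrix.dotProduct_mulVec, ← Sum.elim_comp_inl_inr v,
        Matrix.schur_complement_eq₁₁ (B * Γᵀ) (Γ * D * Γᵀ) _ _ hApos.1, hSchurJS]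
      by_cases hy : (v ∘ Sum.inr) = 0
      · have hx : (v ∘ Sum.inl) ≠ 0 := by
          intro h
          apply hv
          funext i
          cases i with
          | inl i => exact congrFun h i
          | inr i => exact congrFun hy i
        have := hApos.dotProduct_mulVec_pos hx
        simpa [hy, Matrix.dotProduct_mulVec] using this
      · have h1 : (0:ℝ) ≤ star (v ∘ Sum.inl + (A⁻¹ * (B * Γᵀ)) *ᵥ (v ∘ Sum.inr)) ᵥ* A ⬝ᵥ
            (v ∘ Sum.inl + (A⁻¹ * (B * Γᵀ)) *ᵥ (v ∘ Sum.inr)) := by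
          have := hApos.posSemidef.dotProduct_mulVec_nonneg (v ∘ Sum.inl + (A⁻¹ * (B * Γᵀ)) *ᵥ (v ∘ Sum.inr))
          rwa [Matrix.dotProduct_mulVec] at this
        have h2 : (0:ℝ) < star (v ∘ Sum.inr) ᵥ* (Γ * S * Γᵀ) ⬝ᵥ (v ∘ Sum.inr) := by
          have := hGSG.dotProduct_mulVec_pos hy
          rwa [Matrix.dotProduct_mulVec] at this
        linarith
  have hJSdet : IsUnit (Matrix.fromBlocks A (B * Γᵀ) (Γ * C) (Γ * D * Γᵀ)).det :=
    hJSpos.det_pos.ne'.isUnit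
  -- abbreviations
  set W := 1 - Γᵀ * M * (Γ * S) with hWdef
  clear_value W
  -- R facts
  have hRdet : IsUnit R.det := hR.det_pos.ne'.isUnit
  have hRR : R * R⁻¹ = 1 := Matrix.mul_nonsing_inv _ hRdet
  have hRinv2 : R⁻¹ * R⁻¹ = S := by
    rw [← Matrix.mul_inv_rev, hRK, hSinvinv]
  have hRmat : 1 - R * (R⁻¹ * Γᵀ * (Γ * S⁻¹⁻¹ * Γᵀ)⁻¹ * Γ * R⁻¹) * R⁻¹ = W := by
    rw [hSinvinv, ← hMdef, hWdef]
    have e : R * (R⁻¹ * Γᵀ * M * Γ * R⁻¹) * R⁻¹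
        = R * R⁻¹ * (Γᵀ * M * (Γ * (R⁻¹ * R⁻¹))) := by
      simp only [Matrix.mul_assoc]
    rw [e, hRR, hRinv2, Matrix.one_mul]
  -- key matrix identities
  have I1 : A * (A⁻¹ * (B * W)) + (B * Γᵀ) * (M * (Γ * S)) = B := by
    have h1 : A * (A⁻¹ * (B * W)) = B * W := by
      rw [← Matrix.mul_assoc, hAA', Matrix.one_mul]
    rw [h1, hWdef]
    simp only [Matrix.mul_sub, Matrix.mul_one, Matrix.mul_assoc]
    abel
  have I2 : (Γ * C) * (A⁻¹ * (B * W)) + (Γ * D * Γᵀ) * (M * (Γ * S)) = Γ * D := by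
    have step : Γ * S * W = 0 := by
      have e : Γ * S * W = Γ * S - (Γ * S * Γᵀ * M) * (Γ * S) := by
        rw [hWdef]
        simp only [Matrix.mul_sub, Matrix.mul_one, Matrix.mul_assoc]
      rw [e, hMM, Matrix.one_mul, sub_self]
    have hCAB : C * (A⁻¹ * B) = D - S := by
      rw [hSdef, sub_sub_cancel, Matrix.mul_assoc]
    have e1 : (Γ * C) * (A⁻¹ * (B * W)) = Γ * (C * (A⁻¹ * B)) * W := by simp only [Matrix.mul_assoc]
    rw [e1, hCAB]
    have e2 : Γ * (D - S) * W = Γ * D * W - Γ * S * W := by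
      simp only [Matrix.mul_sub, Matrix.sub_mul, Matrix.mul_assoc]
    rw [e2, step, sub_zero, hWdef]
    simp only [Matrix.mul_sub, Matrix.mul_one, Matrix.mul_assoc]
    abel
  -- invert the block system
  have hv : (Matrix.fromBlocks A (B * Γᵀ) (Γ * C) (Γ * D * Γᵀ)) *ᵥ
      (Sum.elim ((A⁻¹ * (B * W)) *ᵥ dlt) ((M * (Γ * S)) *ᵥ dlt))
      = Sum.elim (B *ᵥ dlt) ((Γ * D) *ᵥ dlt) := by
    rw [Matrix.fromBlocks_mulVec]
    simp only [Sum.elim_comp_inl, Sum.elim_comp_inr, Matrix.mulVec_mulVec]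
    rw [← Matrix.add_mulVec, ← Matrix.add_mulVec, I1, I2]
  have hinv : (Matrix.fromBlocks A (B * Γᵀ) (Γ * C) (Γ * D * Γᵀ))⁻¹ *ᵥ
      (Sum.elim (B *ᵥ dlt) ((Γ * D) *ᵥ dlt))
      = Sum.elim ((A⁻¹ * (B * W)) *ᵥ dlt) ((M * (Γ * S)) *ᵥ dlt) := by
    rw [← hv, Matrix.mulVec_mulVec, Matrix.nonsing_inv_mul _ hJSdet, Matrix.one_mulVec]
  rw [hRmat, hinv, sumElim_dotProduct_sumElim]
  -- final vector identity
  have c1' : a ᵥ* A⁻¹ ᵥ* B = C *ᵥ (A⁻¹ *ᵥ a) := by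
    calc a ᵥ* A⁻¹ ᵥ* B = Bᵀ *ᵥ (A⁻¹ᵀ *ᵥ a) := by
          rw [Matrix.mulVec_transpose, Matrix.mulVec_transpose]
      _ = C *ᵥ (A⁻¹ *ᵥ a) := by rw [Matrix.transpose_nonsing_inv, hAsym, ← hCB]
  have c1 : a ᵥ* (A⁻¹ * (B * W)) = (C *ᵥ (A⁻¹ *ᵥ a)) ᵥ* W := by
    simp only [← Matrix.vecMul_vecMul]
    rw [c1']
  have c2 : b ᵥ* W = b - (Γ *ᵥ b) ᵥ* (M * (Γ * S)) := by
    rw [hWdef, Matrix.vecMul_sub, Matrix.vecMul_one]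
    congr 1
    simp only [← Matrix.vecMul_vecMul]
    rw [Matrix.vecMul_transpose]
  have key : a ᵥ* (A⁻¹ * (B * W)) + (Γ *ᵥ b) ᵥ* (M * (Γ * S)) - b
      = (C *ᵥ (A⁻¹ *ᵥ a) - b) ᵥ* W := by
    rw [Matrix.sub_vecMul, ← c1, c2]
    abel
  rw [Matrix.dotProduct_mulVec a, Matrix.dotProduct_mulVec (Γ *ᵥ b),
    Matrix.dotProduct_mulVec (C *ᵥ (A⁻¹ *ᵥ a) - b), ← key]
  simp [add_dotProduct, sub_dotProduct]

end HjortDrift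
end
end
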